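/- The simplified third Helmholtz condition holds for the Christoffel connection of H (eq. (H3Simplified)): Let U ⊆ ℝⁿ be open and H : U → (Fin n → Fin n → ℝ) smooth with H(x) symmetric and invertible for every x. Let Γ^a_{bc} := Γ[H]^a_{bc} be the Christoffel symbols of H and let R_{abc}{}^d := ∂_b Γ^d_{ac} − ∂_a Γ^d_{bc} + Σ_e (Γ^d_{be} Γ^e_{ac} − Γ^d_{ae} Γ^e_{bc}) be the curvature components. Then for all x ∈ U, all v ∈ Fin n → ℝ and all indices i,k: Σ_{a,b} v^a v^b (Σ_c H_{ic}(x) R_{kab}{}^c(x) − Σ_c H_{kc}(x) R_{iab}{}^c(x)) = 0. -/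

import Mathlib

/-! With `Γ_{c,pq}` the Christoffel symbols of the first kind, lowering the upper index with `H`
gives `Σ_c H_{ic} R_{kab}{}^c = T_{ab,ki} - T_{ai,kb}`, where `T = curvatureKernel` is
`T_{pq,rs} = ½ (∂_p ∂_q H_{rs} + ∂_r ∂_s H_{pq}) + Σ_c Γ_{c,pq} Γ^c_{rs}`: differentiating
`Σ_c H_{ic} Γ^c_{pq} = Γ_{i,pq}` and using `∂_w H_{ic} = Γ_{i,wc} + Γ_{c,wi}` removes all
derivatives of `H⁻¹`. By Schwarz's theorem and the symmetry of `H` (hence of `H⁻¹`), `T` is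
symmetric within each index pair and under exchange of the pairs. This makes the bracket of the
theorem antisymmetric in `(a, b)`, so its contraction with `v^a v^b` vanishes. -/

open scoped BigOperators

/-- Partial derivative of `f` in the `a`-th coordinate direction of `ℝⁿ`. -/
noncomputable def pd {n : ℕ} (f : (Fin n → ℝ) → ℝ) (a : Fin n) (x : Fin n → ℝ) : ℝ :=
  fderiv ℝ f x (Pi.single a 1)

/-- Matrix inverse of a square array of reals. -/
noncomputable def minv {n : ℕ} (A : Fin n → Fin n → ℝ) : Fin n → Fin n → ℝ :=
  fun a b => (Matrix.of A)⁻¹ a b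

/-- Christoffel symbols `Γ[H]^a_{bc}(x)` of a (pointwise symmetric, invertible) tensor `H`. -/
noncomputable def christoffel {n : ℕ} (H : (Fin n → ℝ) → Fin n → Fin n → ℝ)
    (x : Fin n → ℝ) (a b c : Fin n) : ℝ :=
  (1 / 2) * ∑ d, minv (H x) a d *
    (pd (fun y => H y c d) b x + pd (fun y => H y b d) c x - pd (fun y => H y b c) d x)

/-- First derivative `γ'^a(t)` of a curve in `ℝⁿ`. -/
noncomputable def cderiv {n : ℕ} (γ : ℝ → Fin n → ℝ) (a : Fin n) (t : ℝ) : ℝ :=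
  deriv (fun s => γ s a) t

/-- Second derivative `γ''^a(t)` of a curve in `ℝⁿ`. -/
noncomputable def cderiv2 {n : ℕ} (γ : ℝ → Fin n → ℝ) (a : Fin n) (t : ℝ) : ℝ :=
  deriv (cderiv γ a) t

/-- Curvature components
`R_{abc}{}^d = ∂_b Γ^d_{ac} − ∂_a Γ^d_{bc} + Σ_e (Γ^d_{be} Γ^e_{ac} − Γ^d_{ae} Γ^e_{bc})`. -/
noncomputable def curv {n : ℕ} (Γ : (Fin n → ℝ) → Fin n → Fin n → Fin n → ℝ)
    (x : Fin n → ℝ) (a b c d : Fin n) : ℝ :=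
  pd (fun y => Γ y d a c) b x - pd (fun y => Γ y d b c) a x
    + ∑ e, (Γ x d b e * Γ x e a c - Γ x d a e * Γ x e b c)

/-- `R̄_{abcd} = Σ_k R_{abc}{}^k H_{kd}`, with `R` the curvature of the Christoffel symbols
of `H`. -/
noncomputable def Rbar {n : ℕ} (H : (Fin n → ℝ) → Fin n → Fin n → ℝ)
    (x : Fin n → ℝ) (a b c d : Fin n) : ℝ :=
  ∑ k, curv (christoffel H) x a b c k * H x k d

open scoped Matrix
open Filter Topology Finset

section PartialDerivative

variable {n : ℕ} {x : Fin n → ℝ} {f g : (Fin n → ℝ) → ℝ}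

theorem pd_congr_of_eventuallyEq (h : f =ᶠ[𝓝 x] g) (a : Fin n) : pd f a x = pd g a x := by
  rw [pd, pd, h.fderiv_eq]

theorem pd_add (hf : DifferentiableAt ℝ f x) (hg : DifferentiableAt ℝ g x) (a : Fin n) :
    pd (fun y => f y + g y) a x = pd f a x + pd g a x := by
  simp [pd, fderiv_fun_add hf hg]

theorem pd_sub (hf : DifferentiableAt ℝ f x) (hg : DifferentiableAt ℝ g x) (a : Fin n) :
    pd (fun y => f y - g y) a x = pd f a x - pd g a x := by
  simp [pd, fderiv_fun_sub hf hg]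

theorem pd_const_mul (hf : DifferentiableAt ℝ f x) (c : ℝ) (a : Fin n) :
    pd (fun y => c * f y) a x = c * pd f a x := by
  simp [pd, fderiv_const_mul hf c]

theorem pd_mul (hf : DifferentiableAt ℝ f x) (hg : DifferentiableAt ℝ g x) (a : Fin n) :
    pd (fun y => f y * g y) a x = f x * pd g a x + g x * pd f a x := by
  simp [pd, fderiv_fun_mul hf hg]

theorem pd_sum {ι : Type*} {s : Finset ι} {F : ι → (Fin n → ℝ) → ℝ}
    (h : ∀ i ∈ s, DifferentiableAt ℝ (F i) x) (a : Fin n) :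
    pd (fun y => ∑ i ∈ s, F i y) a x = ∑ i ∈ s, pd (F i) a x := by
  simp [pd, fderiv_fun_sum h]

theorem ContDiffAt.differentiableAt_pd (hf : ContDiffAt ℝ 2 f x) (a : Fin n) :
    DifferentiableAt ℝ (fun y => pd f a y) x :=
  ((hf.fderiv_right (m := 1) le_rfl).differentiableAt one_ne_zero).clm_apply
    (differentiableAt_const _)

theorem ContDiffAt.pd_pd_comm (hf : ContDiffAt ℝ 2 f x) (a b : Fin n) :
    pd (fun y => pd f b y) a x = pd (fun y => pd f a y) b x := by
  have hd : DifferentiableAt ℝ (fderiv ℝ f) x :=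
    (hf.fderiv_right (m := 1) le_rfl).differentiableAt one_ne_zero
  have hsnd (u w : Fin n → ℝ) :
      fderiv ℝ (fun y => fderiv ℝ f y u) x w = fderiv ℝ (fderiv ℝ f) x w u := by
    simp [fderiv_clm_apply hd (differentiableAt_const u)]
  simp only [pd, hsnd]
  exact hf.isSymmSndFDerivAt (by simp) _ _

end PartialDerivative

section MatrixInverse

variable {𝕜 E ι : Type*} [NontriviallyNormedField 𝕜] [NormedAddCommGroup E] [NormedSpace 𝕜 E]
  [Fintype ι] [DecidableEq ι] {M : E → Matrix ι ι 𝕜} {x : E}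

theorem DifferentiableAt.matrix_det (hM : ∀ p q, DifferentiableAt 𝕜 (fun y => M y p q) x) :
    DifferentiableAt 𝕜 (fun y => (M y).det) x := by
  simp only [Matrix.det_apply, Units.smul_def, zsmul_eq_mul]
  fun_prop

theorem DifferentiableAt.matrix_inv_apply (hM : ∀ p q, DifferentiableAt 𝕜 (fun y => M y p q) x)
    (hdet : (M x).det ≠ 0) (a b : ι) :
    DifferentiableAt 𝕜 (fun y => (M y)⁻¹ a b) x := by
  simp only [Matrix.inv_def, Ring.inverse_eq_inv', Matrix.smul_apply, smul_eq_mul,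
    Matrix.adjugate_apply]
  refine ((matrix_det hM).inv hdet).mul (matrix_det fun p q => ?_)
  simp only [Matrix.updateRow_apply]
  split_ifs
  exacts [differentiableAt_const _, hM p q]

end MatrixInverse

theorem minv_comm {n : ℕ} {A : Fin n → Fin n → ℝ} (hA : ∀ a b, A a b = A b a) (a b : Fin n) :
    minv A a b = minv A b a :=
  (Matrix.IsSymm.ext fun i j => hA j i : (Matrix.of A).IsSymm).inv.apply b a

section Algebra

variable {ι R : Type*} [Fintype ι] [CommRing R] [NoZeroDivisors R] [CharZero R]

theorem sum_sum_mul_mul_eq_zero_of_antisymm (v : ι → R) {W : ι → ι → R}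
    (hW : ∀ a b, W b a = -W a b) : ∑ a, ∑ b, v a * v b * W a b = 0 := by
  rw [← CharZero.eq_neg_self_iff]
  calc ∑ a, ∑ b, v a * v b * W a b = ∑ a, ∑ b, v b * v a * W b a := sum_comm
    _ = -∑ a, ∑ b, v a * v b * W a b := by
      simp only [← sum_neg_distrib]
      exact sum_congr rfl fun a _ => sum_congr rfl fun b _ => by rw [hW]; ring

theorem sum_sum_mul_mul_sub_eq_zero {T : ι → ι → ι → ι → R}
    (hcomm : ∀ p q r s, T p q r s = T r s p q) (hswap : ∀ p q r s, T p q r s = T q p r s)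
    (v : ι → R) (i k : ι) :
    ∑ a, ∑ b, v a * v b * ((T a b k i - T a i k b) - (T a b i k - T a k i b)) = 0 := by
  refine sum_sum_mul_mul_eq_zero_of_antisymm v fun a b => ?_
  have hswap' (p q r s : ι) : T p q r s = T p q s r := by rw [hcomm, hswap, hcomm]
  have hbi : T b i k a = T a k i b := by rw [hcomm, hswap, hswap']
  have hbk : T b k i a = T a i k b := by rw [hcomm, hswap, hswap']
  rw [hswap b a, hswap b a i k, hswap' a b k i, hbi, hbk]
  ring

end Algebra

noncomputable def christoffelFirst {n : ℕ} (H : (Fin n → ℝ) → Fin n → Fin n → ℝ)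
    (x : Fin n → ℝ) (c a b : Fin n) : ℝ :=
  (1 / 2) * (pd (fun y => H y b c) a x + pd (fun y => H y a c) b x - pd (fun y => H y a b) c x)

noncomputable def christoffelContraction {n : ℕ} (H : (Fin n → ℝ) → Fin n → Fin n → ℝ)
    (x : Fin n → ℝ) (p q r s : Fin n) : ℝ :=
  ∑ c, christoffelFirst H x c p q * christoffel H x c r s

noncomputable def curvatureKernel {n : ℕ} (H : (Fin n → ℝ) → Fin n → Fin n → ℝ)
    (x : Fin n → ℝ) (p q r s : Fin n) : ℝ :=
  (1 / 2) * (pd (fun y => pd (fun z => H z r s) q y) p x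
    + pd (fun y => pd (fun z => H z p q) s y) r x) + christoffelContraction H x p q r s

section Christoffel

variable {n : ℕ} {H : (Fin n → ℝ) → Fin n → Fin n → ℝ} {x : Fin n → ℝ}

theorem christoffel_eq_sum_minv_mul (H : (Fin n → ℝ) → Fin n → Fin n → ℝ) (x : Fin n → ℝ)
    (a b c : Fin n) : christoffel H x a b c = ∑ d, minv (H x) a d * christoffelFirst H x d b c := by
  rw [christoffel, mul_sum]
  exact sum_congr rfl fun d _ => by rw [christoffelFirst]; ring

theorem sum_mul_christoffel (hdet : IsUnit (Matrix.of (H x)).det) (i a b : Fin n) :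
    ∑ c, H x i c * christoffel H x c a b = christoffelFirst H x i a b := by
  have hvec : (fun c => christoffel H x c a b)
      = (Matrix.of (H x))⁻¹ *ᵥ fun d => christoffelFirst H x d a b := by
    ext c
    simp [christoffel_eq_sum_minv_mul, Matrix.mulVec, dotProduct, minv]
  calc ∑ c, H x i c * christoffel H x c a b
      = (Matrix.of (H x) *ᵥ fun c => christoffel H x c a b) i := rfl
    _ = christoffelFirst H x i a b := by
      rw [hvec, Matrix.mulVec_mulVec, Matrix.mul_nonsing_inv _ hdet, Matrix.one_mulVec]

theorem pd_entry_comm (hsym : ∀ᶠ y in 𝓝 x, ∀ a b, H y a b = H y b a) (a b c : Fin n) :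
    pd (fun y => H y a b) c x = pd (fun y => H y b a) c x :=
  pd_congr_of_eventuallyEq (hsym.mono fun _ hy => hy a b) c

theorem pd_pd_entry_comm (hsym : ∀ᶠ y in 𝓝 x, ∀ a b, H y a b = H y b a) (a b c d : Fin n) :
    pd (fun y => pd (fun z => H z a b) c y) d x = pd (fun y => pd (fun z => H z b a) c y) d x :=
  pd_congr_of_eventuallyEq (hsym.eventually_nhds.mono fun _ hy => pd_entry_comm hy a b c) d

theorem christoffelFirst_comm (hsym : ∀ᶠ y in 𝓝 x, ∀ a b, H y a b = H y b a) (c a b : Fin n) :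
    christoffelFirst H x c a b = christoffelFirst H x c b a := by
  simp only [christoffelFirst, pd_entry_comm hsym a b c]
  ring

theorem pd_entry_eq_christoffelFirst_add (hsym : ∀ᶠ y in 𝓝 x, ∀ a b, H y a b = H y b a)
    (a b c : Fin n) :
    pd (fun y => H y a b) c x = christoffelFirst H x a c b + christoffelFirst H x b c a := by
  simp only [christoffelFirst, pd_entry_comm hsym b a c]
  ring

theorem christoffelContraction_comm (hsym : ∀ a b, H x a b = H x b a) (p q r s : Fin n) :
    christoffelContraction H x p q r s = christoffelContraction H x r s p q := by
  simp only [christoffelContraction, christoffel_eq_sum_minv_mul, mul_sum]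
  rw [sum_comm]
  exact sum_congr rfl fun c _ => sum_congr rfl fun d _ => by rw [minv_comm hsym]; ring

theorem christoffelContraction_swap (hsym : ∀ᶠ y in 𝓝 x, ∀ a b, H y a b = H y b a)
    (p q r s : Fin n) :
    christoffelContraction H x p q r s = christoffelContraction H x q p r s := by
  simp only [christoffelContraction, christoffelFirst_comm hsym _ p q]

end Christoffel

section Curvature

variable {n : ℕ} {H : (Fin n → ℝ) → Fin n → Fin n → ℝ} {x : Fin n → ℝ}

theorem ContDiffAt.entry {m : WithTop ℕ∞} (hH : ContDiffAt ℝ m H x) (a b : Fin n) :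
    ContDiffAt ℝ m (fun y => H y a b) x :=
  contDiffAt_pi.mp (contDiffAt_pi.mp hH a) b

theorem differentiableAt_christoffel (hH : ContDiffAt ℝ 2 H x)
    (hdet : (Matrix.of (H x)).det ≠ 0) (a b c : Fin n) :
    DifferentiableAt ℝ (fun y => christoffel H y a b c) x := by
  have hent (p q : Fin n) : DifferentiableAt ℝ (fun y => H y p q) x :=
    (hH.entry p q).differentiableAt two_ne_zero
  have hpd (p q w : Fin n) := (hH.entry p q).differentiableAt_pd w
  unfold christoffel minv
  exact (DifferentiableAt.fun_sum fun d _ =>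
    (DifferentiableAt.matrix_inv_apply (M := fun y => Matrix.of (H y)) hent hdet a d).mul
      (((hpd c d b).add (hpd b d c)).sub (hpd b c d))).const_mul _

theorem sum_mul_pd_christoffel (hH : ContDiffAt ℝ 2 H x)
    (hinv : ∀ᶠ y in 𝓝 x, IsUnit (Matrix.of (H y)).det) (i a b w : Fin n) :
    ∑ c, H x i c * pd (fun y => christoffel H y c a b) w x
      = pd (fun y => christoffelFirst H y i a b) w x
        - ∑ c, pd (fun y => H y i c) w x * christoffel H x c a b := by
  have hcontr : (fun y => ∑ c, H y i c * christoffel H y c a b)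
      =ᶠ[𝓝 x] fun y => christoffelFirst H y i a b :=
    hinv.mono fun y hy => sum_mul_christoffel hy i a b
  have hent (c : Fin n) := (hH.entry i c).differentiableAt two_ne_zero
  have hΓ (c : Fin n) := differentiableAt_christoffel hH hinv.self_of_nhds.ne_zero c a b
  rw [← pd_congr_of_eventuallyEq hcontr, pd_sum fun c _ => (hent c).fun_mul (hΓ c)]
  simp only [pd_mul (hent _) (hΓ _), sum_add_distrib, mul_comm (christoffel H x _ a b)]
  ring

theorem sum_mul_pd_christoffel_add_sum (hH : ContDiffAt ℝ 2 H x)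
    (hsym : ∀ᶠ y in 𝓝 x, ∀ a b, H y a b = H y b a)
    (hinv : ∀ᶠ y in 𝓝 x, IsUnit (Matrix.of (H y)).det) (i w a b : Fin n) :
    ∑ c, H x i c * (pd (fun y => christoffel H y c a b) w x
        + ∑ e, christoffel H x c w e * christoffel H x e a b)
      = pd (fun y => christoffelFirst H y i a b) w x - christoffelContraction H x w i a b := by
  have hquad : ∑ c, H x i c * ∑ e, christoffel H x c w e * christoffel H x e a b
      = ∑ e, christoffelFirst H x i w e * christoffel H x e a b := by
    simp only [mul_sum, ← sum_mul_christoffel hinv.self_of_nhds, sum_mul]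
    rw [sum_comm]
    exact sum_congr rfl fun _ _ => sum_congr rfl fun _ _ => by ring
  simp only [mul_add, sum_add_distrib, hquad, sum_mul_pd_christoffel hH hinv,
    pd_entry_eq_christoffelFirst_add hsym, add_mul, christoffelContraction]
  ring

theorem pd_christoffelFirst (hH : ContDiffAt ℝ 2 H x) (c a b w : Fin n) :
    pd (fun y => christoffelFirst H y c a b) w x
      = (1 / 2) * (pd (fun y => pd (fun z => H z b c) a y) w x
        + pd (fun y => pd (fun z => H z a c) b y) w x
        - pd (fun y => pd (fun z => H z a b) c y) w x) := by
  have hpd (p q w : Fin n) := (hH.entry p q).differentiableAt_pd w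
  unfold christoffelFirst
  rw [pd_const_mul (((hpd b c a).fun_add (hpd a c b)).fun_sub (hpd a b c)),
    pd_sub ((hpd b c a).fun_add (hpd a c b)) (hpd a b c), pd_add (hpd b c a) (hpd a c b)]

theorem sum_mul_curv_christoffel (hH : ContDiffAt ℝ 2 H x)
    (hsym : ∀ᶠ y in 𝓝 x, ∀ a b, H y a b = H y b a)
    (hinv : ∀ᶠ y in 𝓝 x, IsUnit (Matrix.of (H y)).det) (i k a b : Fin n) :
    ∑ c, H x i c * curv (christoffel H) x k a b c
      = curvatureKernel H x a b k i - curvatureKernel H x a i k b := by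
  have hsplit : ∑ c, H x i c * curv (christoffel H) x k a b c
      = ∑ c, H x i c * (pd (fun y => christoffel H y c k b) a x
          + ∑ e, christoffel H x c a e * christoffel H x e k b)
        - ∑ c, H x i c * (pd (fun y => christoffel H y c a b) k x
          + ∑ e, christoffel H x c k e * christoffel H x e a b) := by
    rw [← sum_sub_distrib]
    exact sum_congr rfl fun c _ => by rw [curv, sum_sub_distrib]; ring
  rw [hsplit, sum_mul_pd_christoffel_add_sum hH hsym hinv,
    sum_mul_pd_christoffel_add_sum hH hsym hinv, pd_christoffelFirst hH, pd_christoffelFirst hH,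
    (hH.entry b i).pd_pd_comm k a, christoffelContraction_comm hsym.self_of_nhds k i,
    curvatureKernel, curvatureKernel]
  ring

theorem curvatureKernel_comm (hsym : ∀ a b, H x a b = H x b a) (p q r s : Fin n) :
    curvatureKernel H x p q r s = curvatureKernel H x r s p q := by
  rw [curvatureKernel, curvatureKernel, christoffelContraction_comm hsym]
  ring

theorem curvatureKernel_swap (hH : ContDiffAt ℝ 2 H x)
    (hsym : ∀ᶠ y in 𝓝 x, ∀ a b, H y a b = H y b a) (p q r s : Fin n) :
    curvatureKernel H x p q r s = curvatureKernel H x q p r s := by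
  rw [curvatureKernel, curvatureKernel, christoffelContraction_swap hsym,
    (hH.entry r s).pd_pd_comm p q, pd_pd_entry_comm hsym p q s r]

end Curvature

/-- **The simplified third Helmholtz condition holds for the Christoffel connection of `H`**:
`Σ_{a,b} v^a v^b (Σ_c H_{ic} R_{kab}{}^c − Σ_c H_{kc} R_{iab}{}^c) = 0`. -/
theorem helmholtz_three_for_christoffel {n : ℕ} (U : Set (Fin n → ℝ)) (hU : IsOpen U)
    (H : (Fin n → ℝ) → Fin n → Fin n → ℝ)
    (hH : ContDiffOn ℝ (⊤ : ℕ∞) H U)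
    (hHsym : ∀ x ∈ U, ∀ a b, H x a b = H x b a)
    (hHinv : ∀ x ∈ U, IsUnit (Matrix.of (H x)).det) :
    ∀ x ∈ U, ∀ (v : Fin n → ℝ) (i k : Fin n),
      ∑ a, ∑ b, v a * v b *
        (∑ c, H x i c * curv (christoffel H) x k a b c
          - ∑ c, H x k c * curv (christoffel H) x i a b c) = 0 := by
  intro x hx v i k
  have hUx : U ∈ 𝓝 x := hU.mem_nhds hx
  have hH2 : ContDiffAt ℝ 2 H x := (hH.contDiffAt hUx).of_le (WithTop.coe_le_coe.mpr le_top)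
  have hsym : ∀ᶠ y in 𝓝 x, ∀ a b, H y a b = H y b a := eventually_of_mem hUx hHsym
  have hinv : ∀ᶠ y in 𝓝 x, IsUnit (Matrix.of (H y)).det := eventually_of_mem hUx hHinv
  simp only [sum_mul_curv_christoffel hH2 hsym hinv]
  exact sum_sum_mul_mul_sub_eq_zero (curvatureKernel_comm (hHsym x hx))
    (curvatureKernel_swap hH2 hsym) v i k
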